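/- Let m ≥ 1 be an integer and let a, b, c, d, h, x, s be nonnegative integers (s may be rational) satisfying: (1) a + b + c + d = m; (2) a = c + 2d + 1; (3) h ≤ 2c + 3d + 1; (4) x ≤ b; (5) x ≤ 3h; and (6) s ≥ 3a + b − x. Then s ≥ 3m/8. -/

import Mathlib

theorem s_ge_three_m_div_eight_general (m a b c d h x : ℕ) (s : ℚ)
    (h1 : a + b + c + d = m)
    (h2 : a = c + 2 * d + 1)
    (h3 : h ≤ 2 * c + 3 * d + 1)
    (h4 : x ≤ b)
    (h5 : x ≤ 3 * h)
    (h6 : 3 * (a : ℚ) + (b : ℚ) - (x : ℚ) ≤ s) :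
    3 * (m : ℚ) / 8 ≤ s := by
  qify at h1 h2 h3 h4 h5
  have hc : (0 : ℚ) ≤ c := c.cast_nonneg
  have hd : (0 : ℚ) ≤ d := d.cast_nonneg
  -- Average `s ≥ 3a` (from `x ≤ b`) and `s ≥ 3a + b - 3h` (from `x ≤ 3h`) with weights 5/8, 3/8;
  -- using `a = c + 2d + 1` and `h ≤ 2c + 3d + 1`, the surplus over `3m/8` is at least `(12d + 12)/8`.
  calc 3 * (m : ℚ) / 8 ≤ (5 * (3 * a) + 3 * (3 * a + b - 3 * h)) / 8 := by linarith
    _ ≤ 3 * a + b - x := by linarith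
    _ ≤ s := h6

theorem s_ge_three_m_div_eight (m a b c d h x : ℕ) (s : ℚ)
    (hm : 1 ≤ m)
    (h1 : a + b + c + d = m)
    (h2 : a = c + 2 * d + 1)
    (h3 : h ≤ 2 * c + 3 * d + 1)
    (h4 : x ≤ b)
    (h5 : x ≤ 3 * h)
    (h6 : 3 * (a : ℚ) + (b : ℚ) - (x : ℚ) ≤ s) :
    3 * (m : ℚ) / 8 ≤ s :=
  s_ge_three_m_div_eight_general m a b c d h x s h1 h2 h3 h4 h5 h6
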